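/- If p and q are distinct primitive words over an alphabet Σ, then p^i q^j is primitive for all natural numbers i, j ≥ 2. -/

import Mathlib

/-- `wpow v n` is the word `vⁿ`, the `n`-fold concatenation of the word `v` with itself. -/
def wpow {α : Type*} (v : List α) : ℕ → List α
  | 0 => []
  | n + 1 => v ++ wpow v n

/-- A nonempty word `u` is primitive if `u = vⁿ` implies `n = 1`. -/
def Primitive {α : Type*} (u : List α) : Prop :=
  u ≠ [] ∧ ∀ (v : List α) (n : ℕ), u = wpow v n → n = 1

/-!
By the Lyndon–Schützenberger theorem, `xᵃyᵇ = zᶜ` with `a, b, c ≥ 2` and `x, y, z` primitive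
forces `x = y = z`; applied with `z` the primitive root of a word `v` with `pⁱqʲ = vⁿ`, it gives
`p = q`.

It is proved by induction on `|zᶜ|`, assuming `|yᵇ| ≤ |xᵃ|` up to reversal. If
`|xᵃ| ≥ |x| + |z|`, the periodicity lemma applied to the common prefix `xᵃ` of `xᵃ` and `zᶜ` gives
`x = z`, hence `y = z`. Otherwise `c ∈ {2, 3}`. For `c = 3` one has `a = 2` and `z = x x₁` with
`|x₁| = σ = |z| - |x|`; the conjugate `x₁x` of `z` lies inside `yᵇ` and has the periods `σ` and
`|y| ≤ |x|`, so `x` has the period `gcd σ |y|`, which divides `|x|`: impossible for a primitive `x`.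
For `c = 2`, `xᵃ = u yᵇ u` with `0 < |u| < |x|`; writing `x = uw` gives the shorter equation
`(wu)ᵃ = yᵇu²` with `wu` primitive, and the induction hypothesis would make the primitive root of
`u` equal to `wu`, which is too long.
-/

open List

section Words

variable {α : Type*}

@[simp] theorem wpow_zero (v : List α) : wpow v 0 = [] := rfl

theorem wpow_succ (v : List α) (n : ℕ) : wpow v (n + 1) = v ++ wpow v n := rfl

@[simp] theorem length_wpow (v : List α) (n : ℕ) : (wpow v n).length = n * v.length := by
  induction n with
  | zero => simp
  | succ n ih => rw [wpow_succ, length_append, ih, Nat.succ_mul, Nat.add_comm]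

theorem wpow_add (v : List α) (m n : ℕ) : wpow v (m + n) = wpow v m ++ wpow v n := by
  induction m with
  | zero => simp
  | succ m ih => rw [Nat.succ_add, wpow_succ, wpow_succ, ih, append_assoc]

@[simp] theorem wpow_one (v : List α) : wpow v 1 = v := append_nil v

theorem wpow_two (v : List α) : wpow v 2 = v ++ v := by rw [wpow_succ, wpow_one]

theorem wpow_succ' (v : List α) (n : ℕ) : wpow v (n + 1) = wpow v n ++ v := by
  rw [wpow_add, wpow_one]

theorem wpow_mul (v : List α) (m n : ℕ) : wpow (wpow v m) n = wpow v (m * n) := by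
  induction n with
  | zero => simp
  | succ n ih => rw [wpow_succ, ih, Nat.mul_succ, Nat.add_comm, wpow_add]

theorem reverse_wpow (v : List α) (n : ℕ) : (wpow v n).reverse = wpow v.reverse n := by
  induction n with
  | zero => rfl
  | succ n ih => rw [wpow_succ, reverse_append, ih, wpow_succ']

theorem prefix_wpow (v : List α) {n : ℕ} (hn : 0 < n) : v <+: wpow v n := by
  obtain ⟨n, rfl⟩ := Nat.exists_eq_add_one_of_ne_zero hn.ne'
  exact prefix_append v _

theorem append_wpow_append_comm (u w : List α) (n : ℕ) :
    u ++ wpow (w ++ u) n = wpow (u ++ w) n ++ u := by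
  induction n with
  | zero => simp
  | succ n ih => rw [wpow_succ, wpow_succ, append_assoc (u ++ w), ← ih]; simp

theorem wpow_append_comm_of_eq {u w s : List α} {n : ℕ} (h : wpow (u ++ w) n = u ++ s ++ u) :
    wpow (w ++ u) n = s ++ u ++ u := by
  apply append_cancel_left (as := u)
  rw [append_wpow_append_comm, h]
  simp

theorem hasPeriod_wpow (v : List α) (n : ℕ) : HasPeriod (wpow v n) v.length := by
  rcases Nat.eq_zero_or_pos n with rfl | hn
  · exact hasPeriod_empty _
  · rw [HasPeriod, (prefix_iff_eq_take.mp (prefix_wpow v hn)).symm, ← wpow_succ, wpow_succ']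
    exact prefix_append _ _

theorem List.HasPeriod.eq_wpow {w : List α} {d k : ℕ} (hw : HasPeriod w d)
    (hk : w.length = k * d) : w = wpow (w.take d) k := by
  induction k generalizing w with
  | zero => simpa using hk
  | succ k ih =>
    have hdrop : w.drop d = wpow (w.take d) k := by
      rw [ih (hw.infix (drop_suffix d w).isInfix) (by simp [hk, Nat.succ_mul])]
      rcases k with _ | k
      · rfl
      · rw [prefix_iff_eq_take.mp (hw.drop_prefix d), take_take,
          min_eq_left (by simp [hk, Nat.succ_mul])]
    rw [wpow_succ, ← hdrop, take_append_drop]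

theorem List.HasPeriod.append_comm {u v : List α} {d : ℕ} (hp : HasPeriod (u ++ v) d)
    (hd : d ∣ (u ++ v).length) : HasPeriod (v ++ u) d := by
  have h2 := HasPeriod.take_append d _ _ hd le_rfl hp
  rw [take_length] at h2
  exact h2.infix ⟨u, v, by simp⟩

theorem Primitive.length_pos {w : List α} (hw : Primitive w) : 0 < w.length :=
  length_pos_iff.mpr hw.1

theorem Primitive.eq_length_of_hasPeriod {w : List α} {d : ℕ} (hw : Primitive w)
    (hd : HasPeriod w d) (hdvd : d ∣ w.length) : d = w.length := by
  obtain ⟨k, hk⟩ := hdvd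
  obtain rfl : k = 1 := hw.2 _ k (hd.eq_wpow (by rw [hk, Nat.mul_comm]))
  rw [hk, Nat.mul_one]

theorem Primitive.append_comm {u v : List α} (h : Primitive (u ++ v)) : Primitive (v ++ u) := by
  refine ⟨by simpa [and_comm] using h.1, fun t n ht => ?_⟩
  have hlen : (u ++ v).length = n * t.length := by simp [← length_wpow, ← ht, Nat.add_comm]
  have hper : HasPeriod (v ++ u) t.length := ht ▸ hasPeriod_wpow t n
  have ht : t.length = n * t.length :=
    hlen ▸ h.eq_length_of_hasPeriod (hper.append_comm (by simp [ht]))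
      (hlen ▸ Nat.dvd_mul_left _ _)
  have ht0 : 0 < t.length := Nat.pos_of_mul_pos_left (hlen ▸ h.length_pos)
  exact Nat.eq_of_mul_eq_mul_right ht0 (by rw [one_mul, ← ht])

theorem Primitive.reverse {w : List α} (hw : Primitive w) : Primitive w.reverse :=
  ⟨by simpa using hw.1, fun v n h =>
    hw.2 v.reverse n (by rw [← reverse_wpow, ← h, reverse_reverse])⟩

theorem exists_primitive_root {w : List α} (hw : w ≠ []) :
    ∃ r m, Primitive r ∧ 0 < m ∧ w = wpow r m := by
  induction hn : w.length using Nat.strong_induction_on generalizing w with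
  | _ n IH =>
  by_cases hp : Primitive w
  · exact ⟨w, 1, hp, one_pos, (wpow_one w).symm⟩
  obtain ⟨v, k, rfl, hk⟩ : ∃ v k, w = wpow v k ∧ k ≠ 1 := by
    simpa [Primitive, hw] using hp
  have hvk : 0 < k * v.length := by rw [← length_wpow]; exact length_pos_iff.mpr hw
  have hv : v ≠ [] := length_pos_iff.mp (Nat.pos_of_mul_pos_left hvk)
  have hlt : v.length < n := by
    rw [← hn, length_wpow]
    have : 2 ≤ k := by have := Nat.pos_of_mul_pos_right hvk; omega
    nlinarith
  obtain ⟨r, m, hr, hm, rfl⟩ := IH _ hlt hv rfl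
  exact ⟨r, m * k, hr, Nat.mul_pos hm (Nat.pos_of_mul_pos_right hvk), wpow_mul r m k⟩

theorem Primitive.eq_of_common_prefix {x z w : List α} {a c : ℕ} (hx : Primitive x)
    (hz : Primitive z) (hwx : w <+: wpow x a) (hwz : w <+: wpow z c)
    (hlen : x.length + z.length ≤ w.length) : x = z := by
  have hg := ((hasPeriod_wpow x a).infix hwx.isInfix).gcd
    ((hasPeriod_wpow z c).infix hwz.isInfix) (by omega)
  have key : ∀ {v : List α} {k : ℕ}, Primitive v → w <+: wpow v k →
      v.length ≤ w.length → Nat.gcd x.length z.length ∣ v.length →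
      v = w.take v.length ∧ Nat.gcd x.length z.length = v.length := by
    intro v k hv hwv hvw hgv
    have hk : 0 < k := by
      have := hwv.length_le
      rw [length_wpow] at this
      exact Nat.pos_of_mul_pos_right (show 0 < k * v.length by have := hv.length_pos; omega)
    have hvp : v <+: w := prefix_of_prefix_length_le (prefix_wpow v hk) hwv hvw
    exact ⟨prefix_iff_eq_take.mp hvp, hv.eq_length_of_hasPeriod (hg.infix hvp.isInfix) hgv⟩
  obtain ⟨hxw, hgx⟩ := key hx hwx (by omega) (Nat.gcd_dvd_left _ _)
  obtain ⟨hzw, hgz⟩ := key hz hwz (by omega) (Nat.gcd_dvd_right _ _)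
  rw [hxw, hzw, ← hgx, hgz]

theorem Primitive.eq_of_wpow_eq_wpow {y z : List α} {b d : ℕ} (hy : Primitive y)
    (hz : Primitive z) (h : wpow y b = wpow z d) (hb : 0 < b) : y = z := by
  have hlen : b * y.length = d * z.length := by rw [← length_wpow, h, length_wpow]
  have hyb : y.length ≤ b * y.length := Nat.le_mul_of_pos_left _ hb
  have hzd : z.length ≤ d * z.length :=
    Nat.le_mul_of_pos_left _ (Nat.pos_of_mul_pos_right (hlen ▸ Nat.mul_pos hb hy.length_pos))
  refine hy.eq_of_common_prefix hz (w := wpow y (b + b)) (c := d + d) (prefix_refl _) ?_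
    (by simp [Nat.add_mul]; omega)
  rw [wpow_add, h, ← wpow_add]

variable (α) in
def LyndonSchutzenbergerBelow (n : ℕ) : Prop :=
  ∀ ⦃x y z : List α⦄ ⦃a b c : ℕ⦄, Primitive x → Primitive y → Primitive z →
    2 ≤ a → 2 ≤ b → 2 ≤ c → wpow x a ++ wpow y b = wpow z c → c * z.length < n →
    x = z ∧ y = z

section LyndonSchutzenberger

variable {x y z : List α} {a b c : ℕ}

theorem length_eq_of_wpow_append_wpow_eq_wpow (h : wpow x a ++ wpow y b = wpow z c) :
    a * x.length + b * y.length = c * z.length := by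
  simpa using congrArg length h

theorem eq_of_wpow_append_wpow_eq_wpow_of_long (hx : Primitive x) (hy : Primitive y)
    (hz : Primitive z) (hb : 0 < b) (h : wpow x a ++ wpow y b = wpow z c)
    (hlong : x.length + z.length ≤ a * x.length) : x = z ∧ y = z := by
  obtain rfl : x = z :=
    hx.eq_of_common_prefix hz (prefix_refl _) (h ▸ prefix_append _ _) (by simpa using hlong)
  have hac : a ≤ c := by
    have := length_eq_of_wpow_append_wpow_eq_wpow h
    exact Nat.le_of_mul_le_mul_right (by omega) hx.length_pos
  obtain ⟨k, rfl⟩ := Nat.exists_eq_add_of_le hac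
  rw [wpow_add] at h
  exact ⟨rfl, hy.eq_of_wpow_eq_wpow hx (append_cancel_left h) hb⟩

theorem wpow_append_wpow_ne_wpow_three (hx : Primitive x) (ha : 2 ≤ a) (hb : 2 ≤ b)
    (hshort : a * x.length < x.length + z.length) (hyx : b * y.length ≤ a * x.length) :
    wpow x a ++ wpow y b ≠ wpow z 3 := by
  intro h
  have hL := length_eq_of_wpow_append_wpow_eq_wpow h
  have hx0 := hx.length_pos
  obtain rfl : a = 2 := by
    have : a < 3 := by by_contra; nlinarith
    omega
  obtain ⟨σ, hσ⟩ : ∃ σ, z.length = x.length + σ := ⟨z.length - x.length, by omega⟩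
  have hσx : 3 * σ ≤ x.length := by omega
  have hσ0 : 0 < σ := by omega
  have hxx : x ++ x <+: wpow z 3 := h ▸ wpow_two x ▸ prefix_append _ _
  have hxσ : HasPeriod x σ := by
    have hz3 : HasPeriod (wpow x 2) (σ + x.length) := by
      rw [Nat.add_comm, ← hσ]
      exact (hasPeriod_wpow z 3).infix (h ▸ prefix_append _ _).isInfix
    simpa [wpow_two] using (hasPeriod_wpow x 2).drop_of_hasPeriod_add hz3
  have hz : z = x ++ x.take σ := by
    rw [prefix_iff_eq_take.mp (prefix_of_prefix_length_le (prefix_wpow z (by norm_num)) hxx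
      (by simp; omega)), hσ, take_length_add_append]
  have hyb : wpow y b =
      (x ++ x.take σ ++ x).drop (2 * x.length) ++ (x.take σ ++ x ++ x.take σ) := by
    have hz3 : wpow z 3 = (x ++ x.take σ ++ x) ++ (x.take σ ++ x ++ x.take σ) := by
      simp [wpow_succ, hz]
    rw [← drop_append_of_le_length (by simp; omega), ← hz3, ← h,
      show 2 * x.length = (wpow x 2).length by simp, drop_left]
  have hy : HasPeriod (x.take σ ++ x) y.length :=
    (hasPeriod_wpow y b).infix ⟨_, x.take σ, by rw [hyb, append_assoc]⟩
  have hyx : y.length ≤ x.length := by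
    have : 2 * y.length ≤ b * y.length := Nat.mul_le_mul_right _ hb
    omega
  have hg := (HasPeriod.take_append σ σ x dvd_rfl (by omega) hxσ).gcd hy (by simp; omega)
  have hgx : Nat.gcd σ y.length ∣ x.length := by
    refine (Nat.dvd_add_right (Dvd.dvd.mul_left (Nat.gcd_dvd_left σ y.length) 3)).mp ?_
    rw [show 3 * σ + x.length = b * y.length by omega]
    exact Dvd.dvd.mul_left (Nat.gcd_dvd_right σ y.length) b
  have := hx.eq_length_of_hasPeriod (hg.infix (suffix_append _ _).isInfix) hgx
  have := Nat.le_of_dvd hσ0 (Nat.gcd_dvd_left σ y.length)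
  omega

theorem wpow_append_wpow_ne_wpow_two (IH : LyndonSchutzenbergerBelow α (2 * z.length))
    (hx : Primitive x) (hy : Primitive y) (hz : Primitive z) (ha : 2 ≤ a) (hb : 2 ≤ b)
    (hshort : a * x.length < x.length + z.length) (hyx : b * y.length ≤ a * x.length) :
    wpow x a ++ wpow y b ≠ wpow z 2 := by
  intro h
  have hL := length_eq_of_wpow_append_wpow_eq_wpow h
  have h2x : 2 * x.length ≤ a * x.length := Nat.mul_le_mul_right _ ha
  obtain ⟨u, hu⟩ : z <+: wpow x a :=
    prefix_of_prefix_length_le (prefix_wpow z two_pos) (h ▸ prefix_append _ _) (by simp; omega)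
  have hu0 : u ≠ [] := by
    rintro rfl
    exact absurd (hz.2 x a (by simpa using hu)) (by omega)
  have hxa : wpow x a = u ++ wpow y b ++ u := by
    rw [← hu, wpow_two, append_assoc] at h
    rw [← hu, (append_cancel_left h).symm]
  have hlen : z.length + u.length = a * x.length := by rw [← length_append, hu, length_wpow]
  have hlt : a * x.length < 2 * z.length := by omega
  have hux : u.length < x.length := by omega
  obtain ⟨w, rfl⟩ : u <+: x :=
    prefix_of_prefix_length_le ⟨wpow y b ++ u, by rw [hxa, append_assoc]⟩
      (prefix_wpow x (by omega)) hux.le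
  have hconj := wpow_append_comm_of_eq hxa
  obtain ⟨r, m, hr, hm, rfl⟩ := exists_primitive_root hu0
  rw [append_assoc, ← wpow_add] at hconj
  have hrwu := (IH hy hr hx.append_comm hb (by omega) ha hconj.symm
    (by simpa [Nat.add_comm] using hlt)).2
  have hrm : r.length ≤ (wpow r m).length := by simpa using Nat.le_mul_of_pos_left r.length hm
  have := congrArg length hrwu
  simp only [length_append] at this hux
  omega

theorem eq_of_wpow_append_wpow_eq_wpow_of_le (IH : LyndonSchutzenbergerBelow α (c * z.length))
    (hx : Primitive x) (hy : Primitive y) (hz : Primitive z) (ha : 2 ≤ a) (hb : 2 ≤ b)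
    (hc : 2 ≤ c) (h : wpow x a ++ wpow y b = wpow z c) (hyx : b * y.length ≤ a * x.length) :
    x = z ∧ y = z := by
  by_cases hlong : x.length + z.length ≤ a * x.length
  · exact eq_of_wpow_append_wpow_eq_wpow_of_long hx hy hz (by omega) h hlong
  have hc4 : c < 4 := by
    have hL := length_eq_of_wpow_append_wpow_eq_wpow h
    have : 2 * x.length ≤ a * x.length := Nat.mul_le_mul_right _ ha
    exact Nat.lt_of_mul_lt_mul_right (a := z.length) (by omega)
  interval_cases c
  · exact absurd h (wpow_append_wpow_ne_wpow_two IH hx hy hz ha hb (by omega) hyx)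
  · exact absurd h (wpow_append_wpow_ne_wpow_three hx ha hb (by omega) hyx)

theorem lyndonSchutzenbergerBelow (n : ℕ) : LyndonSchutzenbergerBelow α n := by
  induction n using Nat.strong_induction_on with
  | _ n IH =>
  intro x y z a b c hx hy hz ha hb hc h hn
  rcases le_total (b * y.length) (a * x.length) with hyx | hxy
  · exact eq_of_wpow_append_wpow_eq_wpow_of_le (IH _ hn) hx hy hz ha hb hc h hyx
  · have hrev : wpow y.reverse b ++ wpow x.reverse a = wpow z.reverse c := by
      simpa [reverse_wpow] using congrArg reverse h
    simpa [and_comm] using eq_of_wpow_append_wpow_eq_wpow_of_le (IH _ (by simpa using hn))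
      hy.reverse hx.reverse hz.reverse hb ha hc hrev (by simpa using hxy)

theorem Primitive.eq_of_wpow_append_wpow_eq_wpow (hx : Primitive x) (hy : Primitive y)
    (hz : Primitive z) (ha : 2 ≤ a) (hb : 2 ≤ b) (hc : 2 ≤ c)
    (h : wpow x a ++ wpow y b = wpow z c) : x = z ∧ y = z :=
  lyndonSchutzenbergerBelow _ hx hy hz ha hb hc h (Nat.lt_succ_self _)

end LyndonSchutzenberger

end Words

/-- If `p ≠ q` are primitive words, then `pⁱqʲ` is primitive for all `i, j ≥ 2`. -/
theorem primitive_pow_cat_pow {α : Type*} (p q : List α)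
    (hp : Primitive p) (hq : Primitive q) (hne : p ≠ q)
    (i j : ℕ) (hi : 2 ≤ i) (hj : 2 ≤ j) :
    Primitive (wpow p i ++ wpow q j) := by
  have hlen : 0 < (wpow p i ++ wpow q j).length := by
    have := hp.length_pos
    simp only [length_append, length_wpow]
    nlinarith
  refine ⟨length_pos_iff.mp hlen, fun v n hv => ?_⟩
  rw [hv, length_wpow] at hlen
  obtain ⟨r, m, hr, hm, rfl⟩ :=
    exists_primitive_root (length_pos_iff.mp (Nat.pos_of_mul_pos_left hlen))
  by_contra hn
  have hn2 : 2 ≤ n := by have := Nat.pos_of_mul_pos_right hlen; omega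
  rw [wpow_mul] at hv
  obtain ⟨hpr, hqr⟩ := hp.eq_of_wpow_append_wpow_eq_wpow hq hr hi hj (by nlinarith) hv
  exact hne (hpr.trans hqr.symm)
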